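/- arXiv:1605.04901 — 2 statements merged into one kernel-verified Lean document; each statement's English description precedes it below -/
import Mathlib

section
/- The pair V(x,t) = -1, U(x,t) = (1 - ρ/6)C + (Cρ/2) sech²((√ρ/2)(x + x₀ - C t)) is an exact solution of the Regularized Boussinesq System V_t + U_x + (VU)_x - (1/6)V_xxt = 0, U_t + V_x + U U_x - (1/6)U_xxt = 0, for all real x₀, C and nonnegative ρ. -/
open Real

/-- Partial derivative in the first (space) variable. -/
noncomputable def px (f : ℝ → ℝ → ℝ) : ℝ → ℝ → ℝ := fun x t => deriv (fun y => f y t) x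

/-- Partial derivative in the second (time) variable. -/
noncomputable def pt (f : ℝ → ℝ → ℝ) : ℝ → ℝ → ℝ := fun x t => deriv (fun s => f x s) t

/-- Hyperbolic secant. -/
noncomputable def sech (y : ℝ) : ℝ := 1 / Real.cosh y

private lemma cosh_ne (y : ℝ) : Real.cosh y ≠ 0 := (Real.cosh_pos y).ne'

private lemma L1 (z : ℝ) :
    HasDerivAt (fun z => (Real.cosh z)⁻¹ ^ 2)
      (-2 * Real.sinh z * (Real.cosh z)⁻¹ ^ 3) z := by
  have h := ((Real.hasDerivAt_cosh z).inv (cosh_ne z)).pow 2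
  refine h.congr_deriv ?_
  norm_num
  field_simp

private lemma L2 (z : ℝ) :
    HasDerivAt (fun z => Real.sinh z * (Real.cosh z)⁻¹ ^ 3)
      ((Real.cosh z)⁻¹ ^ 2 - 3 * (Real.sinh z) ^ 2 * (Real.cosh z)⁻¹ ^ 4) z := by
  have h := (Real.hasDerivAt_sinh z).mul (((Real.hasDerivAt_cosh z).inv (cosh_ne z)).pow 3)
  refine h.congr_deriv ?_
  norm_num
  field_simp
  ring

private lemma L3 (z : ℝ) :
    HasDerivAt (fun z => (Real.cosh z)⁻¹ ^ 2 - 3 * ((Real.sinh z) ^ 2 * (Real.cosh z)⁻¹ ^ 4))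
      (-8 * Real.sinh z * (Real.cosh z)⁻¹ ^ 3 + 12 * (Real.sinh z) ^ 3 * (Real.cosh z)⁻¹ ^ 5) z := by
  have h := (((Real.hasDerivAt_cosh z).inv (cosh_ne z)).pow 2).sub
    ((((Real.hasDerivAt_sinh z).pow 2).mul (((Real.hasDerivAt_cosh z).inv (cosh_ne z)).pow 4)).const_mul 3)
  refine h.congr_deriv ?_
  norm_num
  field_simp
  ring

/-- The pair V = -1, U = (1 - ρ/6)C + (Cρ/2) sech²((√ρ/2)(x + x₀ - Ct)) is an exact
solution of the Regularized Boussinesq System, for all real x₀, C and nonnegative ρ. -/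
theorem rbs_exact_solution (x₀ C ρ : ℝ) (hρ : 0 ≤ ρ)
    (V U : ℝ → ℝ → ℝ)
    (hV : V = fun _ _ => (-1 : ℝ))
    (hU : U = fun x t =>
      (1 - ρ/6) * C + (C * ρ / 2) * (sech ((Real.sqrt ρ / 2) * (x + x₀ - C * t)))^2) :
    ∀ x t : ℝ,
      pt V x t + px U x t + px (fun x t => V x t * U x t) x t
        - (1/6) * pt (px (px V)) x t = 0 ∧
      pt U x t + px V x t + U x t * px U x t
        - (1/6) * pt (px (px U)) x t = 0 := by
  have hsr : Real.sqrt ρ * Real.sqrt ρ = ρ := Real.mul_self_sqrt hρ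
  have hin : ∀ (x t : ℝ), HasDerivAt (fun x' : ℝ => Real.sqrt ρ / 2 * (x' + x₀ - C * t))
      (Real.sqrt ρ / 2) x := by
    intro x t
    have := (((hasDerivAt_id x).add_const x₀).sub_const (C * t)).const_mul (Real.sqrt ρ / 2)
    simpa using this
  have hinT : ∀ (x t : ℝ), HasDerivAt (fun t' : ℝ => Real.sqrt ρ / 2 * (x + x₀ - C * t'))
      (Real.sqrt ρ / 2 * -C) t := by
    intro x t
    have := (((hasDerivAt_id t).const_mul C).const_sub (x + x₀)).const_mul (Real.sqrt ρ / 2)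
    simpa using this
  -- first spatial derivative of U
  have hpxU : px U = fun x t => C * ρ * Real.sqrt ρ / 2 *
      (-(Real.sinh (Real.sqrt ρ / 2 * (x + x₀ - C * t)) *
        (Real.cosh (Real.sqrt ρ / 2 * (x + x₀ - C * t)))⁻¹ ^ 3)) := by
    rw [hU]
    funext x t
    have H := ((((L1 (Real.sqrt ρ / 2 * (x + x₀ - C * t))).comp x (hin x t)).const_mul
      (C * ρ / 2)).const_add ((1 - ρ/6) * C))
    simp only [px, sech, one_div]
    exact H.deriv.trans (by ring)
  -- second spatial derivative of U
  have hpxpxU : px (px U) = fun x t => -C * ρ * Real.sqrt ρ * Real.sqrt ρ / 4 *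
      ((Real.cosh (Real.sqrt ρ / 2 * (x + x₀ - C * t)))⁻¹ ^ 2 -
        3 * (Real.sinh (Real.sqrt ρ / 2 * (x + x₀ - C * t)) ^ 2 *
          (Real.cosh (Real.sqrt ρ / 2 * (x + x₀ - C * t)))⁻¹ ^ 4)) := by
    rw [hpxU]
    funext x t
    have H := (((L2 (Real.sqrt ρ / 2 * (x + x₀ - C * t))).comp x (hin x t)).neg).const_mul
      (C * ρ * Real.sqrt ρ / 2)
    simp only [px]
    exact H.deriv.trans (by ring)
  -- time derivative of the second spatial derivative
  have hpt3 : ∀ x t : ℝ, pt (px (px U)) x t =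
      C * C * ρ * Real.sqrt ρ * Real.sqrt ρ * Real.sqrt ρ / 8 *
        (-8 * Real.sinh (Real.sqrt ρ / 2 * (x + x₀ - C * t)) *
            (Real.cosh (Real.sqrt ρ / 2 * (x + x₀ - C * t)))⁻¹ ^ 3 +
          12 * Real.sinh (Real.sqrt ρ / 2 * (x + x₀ - C * t)) ^ 3 *
            (Real.cosh (Real.sqrt ρ / 2 * (x + x₀ - C * t)))⁻¹ ^ 5) := by
    intro x t
    rw [hpxpxU]
    have H := ((L3 (Real.sqrt ρ / 2 * (x + x₀ - C * t))).comp t (hinT x t)).const_mul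
      (-C * ρ * Real.sqrt ρ * Real.sqrt ρ / 4)
    simp only [pt]
    exact H.deriv.trans (by ring)
  -- time derivative of U
  have hptU : ∀ x t : ℝ, pt U x t = C * C * ρ * Real.sqrt ρ / 2 *
      (Real.sinh (Real.sqrt ρ / 2 * (x + x₀ - C * t)) *
        (Real.cosh (Real.sqrt ρ / 2 * (x + x₀ - C * t)))⁻¹ ^ 3) := by
    intro x t
    rw [hU]
    have H := ((((L1 (Real.sqrt ρ / 2 * (x + x₀ - C * t))).comp t (hinT x t)).const_mul
      (C * ρ / 2)).const_add ((1 - ρ/6) * C))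
    simp only [pt, sech, one_div]
    exact H.deriv.trans (by ring)
  -- spatial derivative of the product V*U
  have hprod : ∀ x t : ℝ, px (fun x t => V x t * U x t) x t =
      C * ρ * Real.sqrt ρ / 2 *
        (Real.sinh (Real.sqrt ρ / 2 * (x + x₀ - C * t)) *
          (Real.cosh (Real.sqrt ρ / 2 * (x + x₀ - C * t)))⁻¹ ^ 3) := by
    intro x t
    rw [hV, hU]
    have H := (((((L1 (Real.sqrt ρ / 2 * (x + x₀ - C * t))).comp x (hin x t)).const_mul
      (C * ρ / 2)).const_add ((1 - ρ/6) * C)).const_mul (-1))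
    simp only [px, sech, one_div]
    exact H.deriv.trans (by ring)
  -- V pieces
  have hptV : ∀ x t : ℝ, pt V x t = 0 := by intro x t; rw [hV]; simp [pt]
  have hpxV : px V = fun _ _ => (0:ℝ) := by rw [hV]; funext x t; simp [px]
  have hpxVxt : ∀ x t : ℝ, px V x t = 0 := by intro x t; rw [hpxV]
  have hV3 : ∀ x t : ℝ, pt (px (px V)) x t = 0 := by
    intro x t
    rw [hpxV]
    have h0 : px (fun _ _ => (0:ℝ)) = fun _ _ => (0:ℝ) := by funext x t; simp [px]
    rw [h0]
    simp [pt]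
  intro x t
  have hc2 := Real.cosh_sq (Real.sqrt ρ / 2 * (x + x₀ - C * t))
  have hc := cosh_ne (Real.sqrt ρ / 2 * (x + x₀ - C * t))
  constructor
  · rw [hptV x t, hprod x t, hV3 x t]
    simp only [hpxU]
    ring
  · rw [hptU x t, hpxVxt x t, hpt3 x t]
    simp only [hpxU]
    rw [hU]
    simp only [sech, one_div]
    set s := Real.sinh (Real.sqrt ρ / 2 * (x + x₀ - C * t))
    set c := Real.cosh (Real.sqrt ρ / 2 * (x + x₀ - C * t))
    field_simp
    linear_combination (C^2*ρ*Real.sqrt ρ*s*(32*c^2-48*s^2)) * hsr +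
      (C^2*ρ*Real.sqrt ρ*s*ρ*48) * hc2
end

section
/- For any s₁, s₂, s₄ with s₁ - s₂ + 2s₄ ≠ 0, setting κ = (-s₂ + s₃ + 2s₄)/(s₁ - s₂ + 2s₄) and V₀ = 3(1 - 2κ)/(2κ) (with κ > 0), the quantity under the square root in λ = (1/2)√(2V₀/(3(s₁ - s₂) + 2s₂(V₀ + 3))) is positive whenever (κ - 1/2)((s₂ - s₁)κ - s₂) > 0. -/
/-- Case (i) of the solitary wave existence conditions: with κ = (-s₂+s₃+2s₄)/(s₁-s₂+2s₄) > 0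
and V₀ = 3(1-2κ)/(2κ), the radicand 2V₀/(3(s₁-s₂) + 2s₂(V₀+3)) in the width λ is positive
whenever (κ - 1/2)((s₂-s₁)κ - s₂) > 0. -/
theorem boussinesq_width_radicand_pos (s₁ s₂ s₃ s₄ : ℝ)
    (hden : s₁ - s₂ + 2 * s₄ ≠ 0)
    (κ V₀ : ℝ)
    (hκ : κ = (-s₂ + s₃ + 2 * s₄) / (s₁ - s₂ + 2 * s₄))
    (hκpos : 0 < κ)
    (hV₀ : V₀ = 3 * (1 - 2 * κ) / (2 * κ))
    (hcond : 0 < (κ - 1/2) * ((s₂ - s₁) * κ - s₂)) :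
    0 < 2 * V₀ / (3 * (s₁ - s₂) + 2 * s₂ * (V₀ + 3)) := by
  have hB : (s₂ - s₁) * κ - s₂ ≠ 0 := by
    intro h
    rw [h, mul_zero] at hcond
    exact lt_irrefl 0 hcond
  have hκne : κ ≠ 0 := hκpos.ne'
  have hDeq : 3 * (s₁ - s₂) + 2 * s₂ * (V₀ + 3) = -3 * ((s₂ - s₁) * κ - s₂) / κ := by
    rw [hV₀]
    field_simp
    ring
  have hD : 3 * (s₁ - s₂) + 2 * s₂ * (V₀ + 3) ≠ 0 := by
    rw [hDeq]
    exact div_ne_zero (by simpa using hB) hκne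
  have key : 2 * V₀ / (3 * (s₁ - s₂) + 2 * s₂ * (V₀ + 3))
      = 2 * ((κ - 1/2) * ((s₂ - s₁) * κ - s₂)) / ((s₂ - s₁) * κ - s₂)^2 := by
    rw [hDeq, hV₀]
    have hB6 : -(κ * s₂ * 6) + κ * s₁ * 6 + s₂ * 6 ≠ 0 := by
      intro h
      apply hB
      linarith
    field_simp [hB6]
    ring
  rw [key]
  positivity
end
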